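/- arXiv:2604.18441 — 2 statements merged into one kernel-verified Lean document; each statement's English description precedes it below -/
import Mathlib

section
/- Let P and Q be probability measures on ℝ^d such that |Q(B(x,r)) − P(B(x,r))| ≤ ε for all balls B(x,r). Then for every y in the support of P and every m ∈ [0,1), δ_{P,max(m−ε,0)}(y) ≤ δ_{Q,m}(y) ≤ δ_{P,min(m+ε,1)}(y). -/
open MeasureTheory
open scoped ENNReal

/-- Distance-to-measure functional: `δ_{μ,m}(x) = inf{r > 0 : μ(B̄(x,r)) > m}`. -/
noncomputable def deltaDTM {d : ℕ} (μ : Measure (EuclideanSpace ℝ (Fin d))) (m : ℝ)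
    (x : EuclideanSpace ℝ (Fin d)) : ℝ≥0∞ :=
  ⨅ (r : ℝ) (_ : 0 < r ∧ m < (μ (Metric.closedBall x r)).toReal), ENNReal.ofReal r

/-- If `|Q(B̄(x,r)) − P(B̄(x,r))| ≤ ε` for all balls, then for every `y` in the support of
`P` and every `m ∈ [0,1)`,
`δ_{P, max(m−ε,0)}(y) ≤ δ_{Q,m}(y) ≤ δ_{P, min(m+ε,1)}(y)`. -/
theorem stmt4 (d : ℕ) (P Q : Measure (EuclideanSpace ℝ (Fin d)))
    [IsProbabilityMeasure P] [IsProbabilityMeasure Q] (ε : ℝ)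
    (hε : ∀ (x : EuclideanSpace ℝ (Fin d)) (r : ℝ),
      |(Q (Metric.closedBall x r)).toReal - (P (Metric.closedBall x r)).toReal| ≤ ε)
    (y : EuclideanSpace ℝ (Fin d))
    (hy : ∀ r : ℝ, 0 < r → 0 < P (Metric.closedBall y r))
    (m : ℝ) (hm0 : 0 ≤ m) (hm1 : m < 1) :
    deltaDTM P (max (m - ε) 0) y ≤ deltaDTM Q m y ∧
      deltaDTM Q m y ≤ deltaDTM P (min (m + ε) 1) y := by
  constructor
  · refine le_iInf₂ fun r hr => ?_
    obtain ⟨hr0, hrm⟩ := hr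
    refine iInf₂_le r ⟨hr0, ?_⟩
    have habs := abs_le.1 (hε y r)
    have hPpos : 0 < (P (Metric.closedBall y r)).toReal :=
      ENNReal.toReal_pos (hy r hr0).ne' (measure_ne_top P _)
    refine max_lt ?_ hPpos
    linarith [habs.1]
  · refine le_iInf₂ fun r hr => ?_
    obtain ⟨hr0, hrm⟩ := hr
    refine iInf₂_le r ⟨hr0, ?_⟩
    have habs := abs_le.1 (hε y r)
    have hP1 : (P (Metric.closedBall y r)).toReal ≤ 1 := by
      have := prob_le_one (μ := P) (s := Metric.closedBall y r)
      simpa using ENNReal.toReal_le_toReal (measure_ne_top P _) (by simp) |>.2 this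
    have hmin : m + ε < (P (Metric.closedBall y r)).toReal := by
      rcases le_or_gt (m + ε) 1 with h | h
      · simpa [min_eq_left h] using hrm
      · exfalso
        have : min (m + ε) 1 = 1 := min_eq_right h.le
        rw [this] at hrm
        linarith
    linarith [habs.2]
end

section
/- Under the uniform-approximation event |Q(B(x,r)) − P(B(x,r))| ≤ ε for all balls, and the margin condition δ_{P,m+u}(y) − δ_{P,m−u}(y) ≤ κu for all y ∈ ℝ^d and 0 ≤ u ≤ u₀, with ε ≤ min(u₀, m, 1−m), one has sup_y |δ_{Q,m}(y) − δ_{P,m}(y)| ≤ κε. -/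
/-! `δ_{μ,m}(y)` is an infimum over admissible radii, so it is monotone in `m`, and a uniform
`ε`-bound on ball masses makes every radius admissible for `δ_{P,m+ε}` admissible for `δ_{Q,m}`,
and every radius admissible for `δ_{Q,m}` admissible for `δ_{P,m-ε}`. Hence `δ_{Q,m}(y)` and
`δ_{P,m}(y)` both lie in `[δ_{P,m-ε}(y), δ_{P,m+ε}(y)]`, an interval of length at most `κε` by the
margin condition. -/

open MeasureTheory
open scoped ENNReal

section deltaDTM

variable {d : ℕ} {x : EuclideanSpace ℝ (Fin d)}

theorem deltaDTM_le_deltaDTM {μ ν : Measure (EuclideanSpace ℝ (Fin d))} {m m' : ℝ}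
    (h : ∀ r : ℝ, m' < (ν (Metric.closedBall x r)).toReal →
      m < (μ (Metric.closedBall x r)).toReal) :
    deltaDTM μ m x ≤ deltaDTM ν m' x :=
  le_iInf₂ fun r hr => iInf₂_le r ⟨hr.1, h r hr.2⟩

theorem deltaDTM_mono (μ : Measure (EuclideanSpace ℝ (Fin d))) :
    Monotone fun m => deltaDTM μ m x :=
  fun _ _ hmm' => deltaDTM_le_deltaDTM fun _ hr => hmm'.trans_lt hr

theorem deltaDTM_le_deltaDTM_add {μ ν : Measure (EuclideanSpace ℝ (Fin d))} (m ε : ℝ)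
    (h : ∀ r : ℝ, (ν (Metric.closedBall x r)).toReal ≤ (μ (Metric.closedBall x r)).toReal + ε) :
    deltaDTM μ m x ≤ deltaDTM ν (m + ε) x :=
  deltaDTM_le_deltaDTM fun r hr => by linarith [h r]

end deltaDTM

theorem stmt5_general (d : ℕ) (P Q : Measure (EuclideanSpace ℝ (Fin d)))
    (m u₀ κ ε : ℝ)
    (hmargin : ∀ (y : EuclideanSpace ℝ (Fin d)) (u : ℝ), 0 ≤ u → u ≤ u₀ →
      deltaDTM P (m + u) y ≤ deltaDTM P (m - u) y + ENNReal.ofReal (κ * u))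
    (hε0 : 0 ≤ ε) (hε : ε ≤ min u₀ (min m (1 - m)))
    (happrox : ∀ (x : EuclideanSpace ℝ (Fin d)) (r : ℝ),
      |(Q (Metric.closedBall x r)).toReal - (P (Metric.closedBall x r)).toReal| ≤ ε) :
    ∀ y : EuclideanSpace ℝ (Fin d),
      deltaDTM Q m y ≤ deltaDTM P m y + ENNReal.ofReal (κ * ε) ∧
      deltaDTM P m y ≤ deltaDTM Q m y + ENNReal.ofReal (κ * ε) := by
  intro y
  have hQ_le : deltaDTM Q m y ≤ deltaDTM P (m + ε) y :=
    deltaDTM_le_deltaDTM_add m ε fun r => by linarith [(abs_sub_le_iff.mp (happrox y r)).2]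
  have hP_le : deltaDTM P (m - ε) y ≤ deltaDTM Q m y := by
    have h := deltaDTM_le_deltaDTM_add (μ := P) (ν := Q) (m - ε) ε fun r => by
      linarith [(abs_sub_le_iff.mp (happrox y r)).1]
    rwa [sub_add_cancel] at h
  have hwidth := hmargin y ε hε0 (hε.trans (min_le_left _ _))
  have hlow : deltaDTM P (m - ε) y ≤ deltaDTM P m y := deltaDTM_mono P (by linarith)
  have hhigh : deltaDTM P m y ≤ deltaDTM P (m + ε) y := deltaDTM_mono P (by linarith)
  constructor
  · calc deltaDTM Q m y ≤ deltaDTM P (m + ε) y := hQ_le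
      _ ≤ deltaDTM P (m - ε) y + ENNReal.ofReal (κ * ε) := hwidth
      _ ≤ deltaDTM P m y + ENNReal.ofReal (κ * ε) := by gcongr
  · calc deltaDTM P m y ≤ deltaDTM P (m + ε) y := hhigh
      _ ≤ deltaDTM P (m - ε) y + ENNReal.ofReal (κ * ε) := hwidth
      _ ≤ deltaDTM Q m y + ENNReal.ofReal (κ * ε) := by gcongr

/-- Under uniform approximation of `P` by `Q` over balls and the margin condition
`δ_{P,m+u}(y) − δ_{P,m−u}(y) ≤ κu` for `0 ≤ u ≤ u₀`, with `ε ≤ min(u₀, m, 1−m)`, one has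
`sup_y |δ_{Q,m}(y) − δ_{P,m}(y)| ≤ κε`. -/
theorem stmt5 (d : ℕ) (P Q : Measure (EuclideanSpace ℝ (Fin d)))
    [IsProbabilityMeasure P] [IsProbabilityMeasure Q]
    (m u₀ κ ε : ℝ) (hm0 : 0 < m) (hm1 : m < 1) (hu0 : 0 < u₀) (hu0m : u₀ ≤ m) (hκ : 0 < κ)
    (hmargin : ∀ (y : EuclideanSpace ℝ (Fin d)) (u : ℝ), 0 ≤ u → u ≤ u₀ →
      deltaDTM P (m + u) y ≤ deltaDTM P (m - u) y + ENNReal.ofReal (κ * u))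
    (hε0 : 0 ≤ ε) (hε : ε ≤ min u₀ (min m (1 - m)))
    (happrox : ∀ (x : EuclideanSpace ℝ (Fin d)) (r : ℝ),
      |(Q (Metric.closedBall x r)).toReal - (P (Metric.closedBall x r)).toReal| ≤ ε) :
    ∀ y : EuclideanSpace ℝ (Fin d),
      deltaDTM Q m y ≤ deltaDTM P m y + ENNReal.ofReal (κ * ε) ∧
      deltaDTM P m y ≤ deltaDTM Q m y + ENNReal.ofReal (κ * ε) :=
  stmt5_general d P Q m u₀ κ ε hmargin hε0 hε happrox
end
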